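/- (Main theorem.) Suppose additionally that N < kmax and that u is uniform with values A > B > C. If a strategy profile s = (s_1, s_2) is Pareto optimal over the subgame T1, then either s is all-office on T1 (s_i(t_i) = o for every arrival pair (t1, t2) ∈ T1 and every i ∈ {1,2}), or s is the cut-off profile with cut-off N on T1 (for every (t1, t2) ∈ T1 and every i ∈ {1,2}, s_i(t_i) = c if and only if t_i < N, i.e., go to the canteen exactly when arriving before 9:00). -/

import Mathlib

/-- The two actions: `c` (canteen) and `o` (office). -/
inductive Act : Type
  | c : Act
  | o : Act
deriving DecidableEq

open Act

/-- The set of arrival pairs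
`T = {(k, k+1) : kmin ≤ k ≤ kmax - 1} ∪ {(k, k-1) : kmin + 1 ≤ k ≤ kmax}`. -/
noncomputable def T (kmin kmax : ℤ) : Finset (ℤ × ℤ) :=
  ((Finset.Icc kmin (kmax - 1)).image (fun k => (k, k + 1))) ∪
  ((Finset.Icc (kmin + 1) kmax).image (fun k => (k, k - 1)))

/-- Subgame `T1 = {(t1,t2) ∈ T : t1 ≡ kmin (mod 2)}`. -/
noncomputable def T1 (kmin kmax : ℤ) : Finset (ℤ × ℤ) :=
  (T kmin kmax).filter (fun t => t.1 % 2 = kmin % 2)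

/-- Subgame `T2 = {(t1,t2) ∈ T : t2 ≡ kmin (mod 2)}`. -/
noncomputable def T2 (kmin kmax : ℤ) : Finset (ℤ × ℤ) :=
  (T kmin kmax).filter (fun t => t.2 % 2 = kmin % 2)

/-- The expected utility of profile `s` over a set `S` of arrival pairs:
`EU_S(s) = (1/|S|) · Σ_{(t1,t2) ∈ S} u_{(t1,t2)}(s_1(t1), s_2(t2))`. -/
noncomputable def EU (u : ℤ × ℤ → Act → Act → ℝ) (s : (ℤ → Act) × (ℤ → Act))
    (S : Finset (ℤ × ℤ)) : ℝ :=
  (∑ t ∈ S, u t (s.1 t.1) (s.2 t.2)) / S.card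

/-- `s` is Pareto optimal over `S` if no profile `s'` has `EU_S(s') > EU_S(s)`. -/
def ParetoOptimal (u : ℤ × ℤ → Act → Act → ℝ) (S : Finset (ℤ × ℤ))
    (s : (ℤ → Act) × (ℤ → Act)) : Prop :=
  ¬ ∃ s' : (ℤ → Act) × (ℤ → Act), EU u s' S > EU u s S

/-- `u` satisfies conditions (U1) and (U2) on the arrival pairs of `T`. -/
def SatisfiesU1U2 (kmin kmax N : ℤ) (u : ℤ × ℤ → Act → Act → ℝ) : Prop :=
  ∀ t ∈ T kmin kmax,
    (t.1 < N ∧ t.2 < N →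
      u t c c > u t o o ∧ u t o o > u t c o ∧ u t c o = u t o c) ∧
    (N ≤ t.1 ∨ N ≤ t.2 →
      u t o o > u t c o ∧ u t c o = u t o c ∧ u t o c = u t c c)

/-- `u` is uniform with values `A > B > C` (the order is assumed separately). -/
def Uniform (kmin kmax N : ℤ) (u : ℤ × ℤ → Act → Act → ℝ) (A B C : ℝ) : Prop :=
  ∀ t ∈ T kmin kmax,
    (t.1 < N ∧ t.2 < N →
      u t c c = A ∧ u t o o = B ∧ u t c o = C ∧ u t o c = C) ∧
    (N ≤ t.1 ∨ N ≤ t.2 →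
      u t o o = B ∧ u t c c = C ∧ u t c o = C ∧ u t o c = C)

/-- The cut-off strategy with cut-off `m`: canteen iff arriving strictly before `m`. -/
def cutoff (m : ℤ) : ℤ → Act := fun k => if k < m then c else o

/-- The all-office strategy. -/
def allOffice : ℤ → Act := fun _ => o

/-!
Reading the arrival times `kmin, …, kmax` as the nodes of a path, the pairs of `T1` are exactly
its edges `{k, k + 1}`, with player 1 sitting at the endpoint of the parity of `kmin`. Merging the
two strategies into one labelling `m` of the nodes turns `EU_{T1}` into a sum of edge payoffs
depending only on `m k`, `m (k + 1)` and whether `k + 1 < N`, so a Pareto optimal profile is a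
maximising labelling. Such a labelling is `o` from `N` on: relabelling all of `[N, kmax]` by `o`
never hurts an edge and gains `B - C` at an edge containing a late `c`. Before `N` it is
constant: otherwise some edge below `N - 1` scores `C`, and the cut-off labelling gains `A - C`
there while losing at most `B - C` at the edge `{N - 1, N}`.
-/

open Act Finset

theorem Int.apply_eq_apply_of_add_one_eq {α : Type*} {f : ℤ → α} {a b : ℤ}
    (h : ∀ j, a ≤ j → j < b → f (j + 1) = f j) {k : ℤ} (hak : a ≤ k) (hkb : k ≤ b) :
    f k = f a := by
  induction k, hak using Int.leInduction with
  | base => rfl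
  | succ k hak ih => exact (h k hak (by omega)).trans (ih (by omega))

section Payoff

variable (A B C : ℝ)

/-- The payoff of a uniform utility at an arrival pair, `early` meaning both arrivals are
before `N`. -/
def uniformPayoff (early : Prop) [Decidable early] : Act → Act → ℝ
  | c, c => if early then A else C
  | o, o => B
  | _, _ => C

variable {A B C} {early : Prop} [Decidable early]

@[simp]
theorem uniformPayoff_c_c : uniformPayoff A B C early c c = if early then A else C := rfl

@[simp]
theorem uniformPayoff_o_o : uniformPayoff A B C early o o = B := rfl

@[simp]
theorem uniformPayoff_c_o : uniformPayoff A B C early c o = C := rfl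

@[simp]
theorem uniformPayoff_o_c : uniformPayoff A B C early o c = C := rfl

theorem uniformPayoff_comm (x y : Act) :
    uniformPayoff A B C early x y = uniformPayoff A B C early y x := by
  cases x <;> cases y <;> rfl

theorem uniformPayoff_le (hAB : B ≤ A) (hBC : C ≤ B) (x y : Act) :
    uniformPayoff A B C early x y ≤ A := by
  cases x <;> cases y <;> simp only [uniformPayoff] <;> (try split_ifs) <;> linarith

theorem uniformPayoff_of_not (he : ¬early) (x y : Act) :
    uniformPayoff A B C early x y = if x = o ∧ y = o then B else C := by
  cases x <;> cases y <;> simp [uniformPayoff, he]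

theorem uniformPayoff_le_of_not (he : ¬early) (hBC : C ≤ B) (x y : Act) :
    uniformPayoff A B C early x y ≤ B := by
  rw [uniformPayoff_of_not he]
  split_ifs <;> linarith

end Payoff

theorem Uniform.apply_eq {kmin kmax N : ℤ} {u : ℤ × ℤ → Act → Act → ℝ} {A B C : ℝ}
    (hu : Uniform kmin kmax N u A B C) {t : ℤ × ℤ} (ht : t ∈ T kmin kmax) (x y : Act) :
    u t x y = uniformPayoff A B C (t.1 < N ∧ t.2 < N) x y := by
  by_cases h : t.1 < N ∧ t.2 < N
  · obtain ⟨hcc, hoo, hco, hoc⟩ := (hu t ht).1 h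
    cases x <;> cases y <;> simp [uniformPayoff, *]
  · obtain ⟨hoo, hcc, hco, hoc⟩ := (hu t ht).2 (by omega)
    cases x <;> cases y <;> simp [uniformPayoff, *]

def T1Edge (kmin k : ℤ) : ℤ × ℤ := if k % 2 = kmin % 2 then (k, k + 1) else (k + 1, k)

theorem T1Edge_injective (kmin : ℤ) : Function.Injective (T1Edge kmin) := by
  intro k l h
  unfold T1Edge at h
  split_ifs at h <;> simp only [Prod.mk.injEq] at h <;> omega

theorem T1_eq_image_T1Edge (kmin kmax : ℤ) :
    T1 kmin kmax = (Ico kmin kmax).image (T1Edge kmin) := by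
  ext ⟨t₁, t₂⟩
  simp only [T1, T, T1Edge, mem_filter, mem_union, mem_image, mem_Icc, mem_Ico]
  constructor
  · rintro ⟨⟨k, hk, hkt⟩ | ⟨k, hk, hkt⟩, hpar⟩ <;> simp only [Prod.mk.injEq] at hkt hpar
    · exact ⟨k, by omega, by rw [if_pos (by omega)]; simp only [Prod.mk.injEq]; omega⟩
    · exact ⟨k - 1, by omega, by rw [if_neg (by omega)]; simp only [Prod.mk.injEq]; omega⟩
  · rintro ⟨k, hk, hkt⟩
    split_ifs at hkt with hpar <;> simp only [Prod.mk.injEq] at hkt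
    · exact ⟨Or.inl ⟨k, by omega, by simp only [Prod.mk.injEq]; omega⟩, by omega⟩
    · exact ⟨Or.inr ⟨k + 1, by omega, by simp only [Prod.mk.injEq]; omega⟩, by omega⟩

theorem mem_Icc_of_mem_T {kmin kmax : ℤ} {t : ℤ × ℤ} (ht : t ∈ T kmin kmax) :
    t.1 ∈ Icc kmin kmax ∧ t.2 ∈ Icc kmin kmax := by
  simp only [T, mem_union, mem_image, mem_Icc] at ht ⊢
  rcases ht with ⟨k, hk, rfl⟩ | ⟨k, hk, rfl⟩ <;> omega

def mergeProfile (kmin : ℤ) (s : (ℤ → Act) × (ℤ → Act)) (k : ℤ) : Act :=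
  if k % 2 = kmin % 2 then s.1 k else s.2 k

theorem mergeProfile_self (kmin : ℤ) (f : ℤ → Act) : mergeProfile kmin (f, f) = f := by
  funext k
  unfold mergeProfile
  split_ifs <;> rfl

theorem mergeProfile_of_mem_T1 {kmin kmax : ℤ} (s : (ℤ → Act) × (ℤ → Act)) {t : ℤ × ℤ}
    (ht : t ∈ T1 kmin kmax) :
    mergeProfile kmin s t.1 = s.1 t.1 ∧ mergeProfile kmin s t.2 = s.2 t.2 := by
  rw [T1_eq_image_T1Edge] at ht
  obtain ⟨k, -, rfl⟩ := mem_image.mp ht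
  unfold T1Edge mergeProfile
  split_ifs <;> simp_all <;> omega

noncomputable def pathValue (kmin kmax N : ℤ) (A B C : ℝ) (m : ℤ → Act) : ℝ :=
  ∑ k ∈ Ico kmin kmax, uniformPayoff A B C (k + 1 < N) (m k) (m (k + 1))

theorem sum_T1_eq_pathValue {kmin kmax N : ℤ} {u : ℤ × ℤ → Act → Act → ℝ} {A B C : ℝ}
    (hu : Uniform kmin kmax N u A B C) (s : (ℤ → Act) × (ℤ → Act)) :
    ∑ t ∈ T1 kmin kmax, u t (s.1 t.1) (s.2 t.2) =
      pathValue kmin kmax N A B C (mergeProfile kmin s) := by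
  rw [T1_eq_image_T1Edge, sum_image fun k _ l _ h => T1Edge_injective kmin h, pathValue]
  refine sum_congr rfl fun k hk => ?_
  have hT1 : T1Edge kmin k ∈ T1 kmin kmax := by
    rw [T1_eq_image_T1Edge]; exact mem_image_of_mem _ hk
  obtain ⟨h₁, h₂⟩ := mergeProfile_of_mem_T1 s hT1
  rw [← h₁, ← h₂, Uniform.apply_eq hu (mem_filter.mp hT1).1]
  unfold T1Edge
  split_ifs
  · simp only [show k < N ∧ k + 1 < N ↔ k + 1 < N by omega]
  · simp only [show k + 1 < N ∧ k < N ↔ k + 1 < N by omega, uniformPayoff_comm]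

theorem ParetoOptimal.sum_le {u : ℤ × ℤ → Act → Act → ℝ} {S : Finset (ℤ × ℤ)}
    {s : (ℤ → Act) × (ℤ → Act)} (hpo : ParetoOptimal u S s) (s' : (ℤ → Act) × (ℤ → Act)) :
    ∑ t ∈ S, u t (s'.1 t.1) (s'.2 t.2) ≤ ∑ t ∈ S, u t (s.1 t.1) (s.2 t.2) := by
  by_contra! hlt
  have hS : S.Nonempty := by
    by_contra hS
    simp [not_nonempty_iff_eq_empty.mp hS] at hlt
  exact hpo ⟨s', div_lt_div_of_pos_right hlt (by exact_mod_cast hS.card_pos)⟩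

section Optimal

variable {kmin kmax N : ℤ} {A B C : ℝ} {m : ℤ → Act}
  (hm : ∀ f, pathValue kmin kmax N A B C f ≤ pathValue kmin kmax N A B C m)
include hm

theorem office_of_isMax (hkmin : kmin < kmax) (hN : N < kmax) (hBC : C < B) {k : ℤ}
    (hkI : k ∈ Icc kmin kmax) (hNk : N ≤ k) : m k = o := by
  by_contra hmk
  set f : ℤ → Act := fun i => if N ≤ i then o else m i
  have hle : ∀ i ∈ Ico kmin kmax, uniformPayoff A B C (i + 1 < N) (m i) (m (i + 1))
      ≤ uniformPayoff A B C (i + 1 < N) (f i) (f (i + 1)) := by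
    intro i _
    by_cases hi : i + 1 < N
    · simp [f, show ¬N ≤ i by omega, show ¬N ≤ i + 1 by omega]
    · rw [uniformPayoff_of_not hi, uniformPayoff_of_not hi]
      simp only [f, if_pos (show N ≤ i + 1 by omega)]
      split_ifs <;> simp_all <;> linarith
  obtain ⟨i, hi, hNi, hki⟩ : ∃ i ∈ Ico kmin kmax, N ≤ i ∧ (i = k ∨ i + 1 = k) := by
    rw [mem_Icc] at hkI
    by_cases hkmax : k < kmax
    · exact ⟨k, mem_Ico.mpr ⟨hkI.1, hkmax⟩, hNk, Or.inl rfl⟩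
    · exact ⟨k - 1, mem_Ico.mpr ⟨by omega, by omega⟩, by omega, Or.inr (by omega)⟩
  have hlt : uniformPayoff A B C (i + 1 < N) (m i) (m (i + 1))
      < uniformPayoff A B C (i + 1 < N) (f i) (f (i + 1)) := by
    have hi : ¬i + 1 < N := by omega
    rw [uniformPayoff_of_not hi, uniformPayoff_of_not hi]
    simp only [f, if_pos hNi, if_pos (show N ≤ i + 1 by omega), and_self, if_true]
    rw [if_neg (by rcases hki with rfl | rfl <;> tauto)]
    exact hBC
  exact (hm f).not_gt (sum_lt_sum hle ⟨i, hi, hlt⟩)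

theorem add_one_eq_of_isMax (hN : N < kmax) (hAB : B < A) (hBC : C < B) {j : ℤ} (hj : kmin ≤ j)
    (hjN : j + 2 ≤ N) : m (j + 1) = m j := by
  by_contra hjump
  have hoffice : ∀ k, N ≤ k → k ≤ kmax → m k = o := fun k hNk hk =>
    office_of_isMax hm (by omega) hN hBC (mem_Icc.mpr ⟨by omega, hk⟩) hNk
  set d : ℤ → ℝ := fun i => uniformPayoff A B C (i + 1 < N) (cutoff N i) (cutoff N (i + 1))
    - uniformPayoff A B C (i + 1 < N) (m i) (m (i + 1))
  have hd_nonneg : ∀ i ∈ Ico kmin kmax, i ∉ ({j, N - 1} : Finset ℤ) → 0 ≤ d i := by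
    intro i hi hij
    simp only [mem_Ico, mem_insert, mem_singleton, not_or] at hi hij
    by_cases hiN : i + 1 < N
    · have := uniformPayoff_le (early := i + 1 < N) hAB.le hBC.le (m i) (m (i + 1))
      simp only [d, cutoff, if_pos hiN, if_pos (show i < N by omega), uniformPayoff_c_c]
      linarith
    · simp [d, hoffice i (by omega) (by omega), hoffice (i + 1) (by omega) (by omega), cutoff,
        show ¬i < N by omega, show ¬i + 1 < N by omega]
  have hdj : A - C ≤ d j := by
    have hmj : uniformPayoff A B C (j + 1 < N) (m j) (m (j + 1)) = C := by
      cases hx : m j <;> cases hy : m (j + 1) <;> simp_all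
    simp only [d, hmj, cutoff, if_pos (show j < N by omega), if_pos (show j + 1 < N by omega),
      uniformPayoff_c_c]
    linarith
  have hdN : C - B ≤ d (N - 1) := by
    have := uniformPayoff_le_of_not (A := A) (early := N - 1 + 1 < N) (by omega) hBC.le (m (N - 1))
      (m (N - 1 + 1))
    simp only [d, cutoff, if_pos (show N - 1 < N by omega), if_neg (show ¬N - 1 + 1 < N by omega),
      uniformPayoff_c_o]
    linarith
  have hpair : d j + d (N - 1) ≤ ∑ i ∈ Ico kmin kmax, d i := by
    rw [← sum_pair (show j ≠ N - 1 by omega)]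
    refine sum_le_sum_of_subset_of_nonneg ?_ hd_nonneg
    intro i hi
    simp only [mem_insert, mem_singleton] at hi
    rw [mem_Ico]
    omega
  have hcut := hm (cutoff N)
  simp only [d, sum_sub_distrib] at hpair
  simp only [pathValue] at hcut
  linarith

theorem office_or_cutoff_of_isMax (hkmin : kmin < kmax) (hN : N < kmax) (hAB : B < A)
    (hBC : C < B) :
    (∀ k ∈ Icc kmin kmax, m k = o) ∨ (∀ k ∈ Icc kmin kmax, m k = c ↔ k < N) := by
  have hearly : ∀ k, kmin ≤ k → k < N → m k = m kmin := fun k hk hkN =>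
    Int.apply_eq_apply_of_add_one_eq (b := N - 1)
      (fun j hj hjN => add_one_eq_of_isMax hm hN hAB hBC hj (by omega)) hk (by omega)
  have hlate : ∀ k ∈ Icc kmin kmax, N ≤ k → m k = o := fun k => office_of_isMax hm hkmin hN hBC
  cases hmin : m kmin
  · refine Or.inr fun k hk => ?_
    by_cases hkN : k < N
    · simp [hearly k (mem_Icc.mp hk).1 hkN, hmin, hkN]
    · simp [hlate k hk (by omega), hkN]
  · refine Or.inl fun k hk => ?_
    by_cases hkN : k < N
    · rw [hearly k (mem_Icc.mp hk).1 hkN, hmin]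
    · exact hlate k hk (by omega)

end Optimal

theorem stmt_3_general (kmin kmax N : ℤ) (h1 : kmin < N) (h3 : N < kmax)
    (A B C : ℝ) (hAB : A > B) (hBC : B > C)
    (u : ℤ × ℤ → Act → Act → ℝ) (hu : Uniform kmin kmax N u A B C)
    (s : (ℤ → Act) × (ℤ → Act))
    (hpo : ParetoOptimal u (T1 kmin kmax) s) :
    (∀ t ∈ T1 kmin kmax, s.1 t.1 = Act.o ∧ s.2 t.2 = Act.o) ∨
    (∀ t ∈ T1 kmin kmax,
      (s.1 t.1 = Act.c ↔ t.1 < N) ∧ (s.2 t.2 = Act.c ↔ t.2 < N)) := by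
  have hm : ∀ f,
      pathValue kmin kmax N A B C f ≤ pathValue kmin kmax N A B C (mergeProfile kmin s) := by
    intro f
    have := ParetoOptimal.sum_le hpo (f, f)
    rwa [sum_T1_eq_pathValue hu, sum_T1_eq_pathValue hu, mergeProfile_self] at this
  have hends : ∀ t ∈ T1 kmin kmax, (t.1 ∈ Icc kmin kmax ∧ t.2 ∈ Icc kmin kmax) ∧
      mergeProfile kmin s t.1 = s.1 t.1 ∧ mergeProfile kmin s t.2 = s.2 t.2 := fun t ht =>
    ⟨mem_Icc_of_mem_T (mem_filter.mp ht).1, mergeProfile_of_mem_T1 s ht⟩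
  rcases office_or_cutoff_of_isMax hm (h1.trans h3) h3 hAB hBC with h | h
  · refine Or.inl fun t ht => ?_
    obtain ⟨⟨h₁, h₂⟩, e₁, e₂⟩ := hends t ht
    exact ⟨e₁ ▸ h _ h₁, e₂ ▸ h _ h₂⟩
  · refine Or.inr fun t ht => ?_
    obtain ⟨⟨h₁, h₂⟩, e₁, e₂⟩ := hends t ht
    exact ⟨e₁ ▸ h _ h₁, e₂ ▸ h _ h₂⟩

/-- Main theorem: With a uniform utility with values `A > B > C`, any
profile Pareto optimal over the subgame `T1` is either all-office on `T1` or the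
cut-off profile with cut-off `N` on `T1`. -/
theorem stmt_3 (kmin kmax N : ℤ) (h1 : kmin < N) (h2 : N ≤ kmax) (h3 : N < kmax)
    (A B C : ℝ) (hAB : A > B) (hBC : B > C)
    (u : ℤ × ℤ → Act → Act → ℝ) (hu : Uniform kmin kmax N u A B C)
    (s : (ℤ → Act) × (ℤ → Act))
    (hpo : ParetoOptimal u (T1 kmin kmax) s) :
    (∀ t ∈ T1 kmin kmax, s.1 t.1 = Act.o ∧ s.2 t.2 = Act.o) ∨
    (∀ t ∈ T1 kmin kmax,
      (s.1 t.1 = Act.c ↔ t.1 < N) ∧ (s.2 t.2 = Act.c ↔ t.2 < N)) :=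
  stmt_3_general kmin kmax N h1 h3 A B C hAB hBC u hu s hpo
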